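/- arXiv:0710.4271 — 4 statements merged into one kernel-verified Lean document; each statement's English description precedes it below -/
import Mathlib

section
/- For all positive integers t, 2^(4t) < C((2t+1)^2, t) * 3^t, where C(n,k) is the binomial coefficient. -/
theorem stmt3 (t : ℕ) (ht : 0 < t) :
    2 ^ (4 * t) < Nat.choose ((2 * t + 1) ^ 2) t * 3 ^ t := by
  have hsq : (2 * t + 1) ^ 2 = 4 * t ^ 2 + 4 * t + 1 := by ring
  have h1 : (4 * t ^ 2 + 3 * t + 2) ^ t ≤
      Nat.factorial t * Nat.choose ((2 * t + 1) ^ 2) t := by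
    have h := Nat.pow_sub_le_descFactorial ((2 * t + 1) ^ 2) t
    rw [Nat.descFactorial_eq_factorial_mul_choose] at h
    have heq : (2 * t + 1) ^ 2 + 1 - t = 4 * t ^ 2 + 3 * t + 2 := by omega
    rwa [heq] at h
  have hfac : Nat.factorial t ≤ t ^ t := Nat.factorial_le_pow t
  have hkey : 2 ^ (4 * t) * Nat.factorial t <
      Nat.choose ((2 * t + 1) ^ 2) t * 3 ^ t * Nat.factorial t := by
    calc 2 ^ (4 * t) * Nat.factorial t ≤ 2 ^ (4 * t) * t ^ t :=
          Nat.mul_le_mul_left _ hfac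
      _ = (16 * t) ^ t := by rw [Nat.mul_pow, pow_mul]; norm_num
      _ < (3 * (4 * t ^ 2 + 3 * t + 2)) ^ t := by
          apply Nat.pow_lt_pow_left _ (by omega)
          nlinarith
      _ = 3 ^ t * (4 * t ^ 2 + 3 * t + 2) ^ t := by rw [Nat.mul_pow]
      _ ≤ 3 ^ t * (Nat.factorial t * Nat.choose ((2 * t + 1) ^ 2) t) :=
          Nat.mul_le_mul_left _ h1
      _ = Nat.choose ((2 * t + 1) ^ 2) t * 3 ^ t * Nat.factorial t := by ring
  exact Nat.lt_of_mul_lt_mul_right hkey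
end

section
/- For all positive integers t, 2^((2t+1)^2 - 1 - 4t^2) < ∑_{j=0}^{t} C((2t+1)^2, j) * 3^j. -/
/-!
The exponent is `4t`, so the left side is `16 ^ t`, and it suffices to beat it with the single
term `j = t` of the sum. With `n = (2t+1)^2`, the bound `C(n, t) ≥ (n / t) ^ t` gives
`C(n, t) 3 ^ t ≥ (3n / t) ^ t ≥ 16 ^ t`, since `3 (2t+1)^2 ≥ 16 t`; the term `j = 0` makes the
inequality strict.
-/

open Finset

namespace Nat

theorem pow_mul_factorial_le_pow_mul_descFactorial {n k : ℕ} (hk : k ≤ n) :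
    n ^ k * k ! ≤ k ^ k * n.descFactorial k := by
  rw [← descFactorial_self, descFactorial_eq_prod_range, descFactorial_eq_prod_range,
    ← card_range k, ← prod_const, ← prod_const, card_range, ← prod_mul_distrib,
    ← prod_mul_distrib]
  refine prod_le_prod' fun i _ => ?_
  have hik : k * i ≤ n * i := Nat.mul_le_mul_right i hk
  rw [Nat.mul_sub, Nat.mul_sub, Nat.mul_comm n k]
  omega

theorem pow_le_pow_mul_choose {n k : ℕ} (hk : k ≤ n) : n ^ k ≤ k ^ k * n.choose k := by
  have h := pow_mul_factorial_le_pow_mul_descFactorial hk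
  rw [descFactorial_eq_factorial_mul_choose, Nat.mul_left_comm, Nat.mul_comm (n ^ k)] at h
  exact Nat.le_of_mul_le_mul_left h (factorial_pos k)

end Nat

theorem choose_mul_pow_lt_sum_range (n a : ℕ) {t : ℕ} (ht : 0 < t) :
    n.choose t * a ^ t < ∑ j ∈ range (t + 1), n.choose j * a ^ j :=
  single_lt_sum (f := fun j => n.choose j * a ^ j) ht.ne (self_mem_range_succ t)
    (mem_range.mpr t.succ_pos) (by simp) fun _ _ _ => Nat.zero_le _

theorem sixteen_pow_le_choose_mul_three_pow (t : ℕ) :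
    16 ^ t ≤ ((2 * t + 1) ^ 2).choose t * 3 ^ t := by
  have hmul : 16 * t ≤ 3 * (2 * t + 1) ^ 2 := by nlinarith [Nat.le_self_pow two_ne_zero t]
  have htn : t ≤ (2 * t + 1) ^ 2 := by nlinarith
  have key : 16 ^ t * t ^ t ≤ ((2 * t + 1) ^ 2).choose t * 3 ^ t * t ^ t :=
    calc 16 ^ t * t ^ t = (16 * t) ^ t := (mul_pow _ _ _).symm
      _ ≤ (3 * (2 * t + 1) ^ 2) ^ t := Nat.pow_le_pow_left hmul t
      _ = 3 ^ t * ((2 * t + 1) ^ 2) ^ t := mul_pow _ _ _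
      _ ≤ 3 ^ t * (t ^ t * ((2 * t + 1) ^ 2).choose t) :=
          Nat.mul_le_mul_left _ (Nat.pow_le_pow_mul_choose htn)
      _ = ((2 * t + 1) ^ 2).choose t * 3 ^ t * t ^ t := by ring
  exact Nat.le_of_mul_le_mul_right key Nat.pow_self_pos

theorem stmt4 (t : ℕ) (ht : 0 < t) :
    2 ^ ((2 * t + 1) ^ 2 - 1 - 4 * t ^ 2) <
      ∑ j ∈ Finset.range (t + 1), Nat.choose ((2 * t + 1) ^ 2) j * 3 ^ j := by
  have hexp : (2 * t + 1) ^ 2 - 1 - 4 * t ^ 2 = 4 * t := by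
    have : (2 * t + 1) ^ 2 = 4 * t ^ 2 + 4 * t + 1 := by ring
    omega
  calc 2 ^ ((2 * t + 1) ^ 2 - 1 - 4 * t ^ 2) = 16 ^ t := by rw [hexp, pow_mul]; norm_num
    _ ≤ ((2 * t + 1) ^ 2).choose t * 3 ^ t := sixteen_pow_le_choose_mul_three_pow t
    _ < _ := choose_mul_pow_lt_sum_range _ 3 ht
end

section
/- For every natural number N there exists a positive integer n > N such that, with parameters n' = n^2, k = 1, r = (n-1)^2, d = n, the quantum Hamming bound inequality 2^(n'-k-r) ≥ ∑_{j=0}^{⌊(d-1)/2⌋} C(n',j) 3^j fails. -/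
lemma aux_pow_le_descFactorial : ∀ (k n : ℕ), (n + 1 - k) ^ k ≤ n.descFactorial k
  | 0, n => by simp
  | k + 1, n => by
    rw [Nat.descFactorial_succ]
    have h : n + 1 - (k + 1) = n - k := by omega
    calc (n + 1 - (k + 1)) ^ (k + 1) = (n - k) * (n - k) ^ k := by
          rw [h, pow_succ, mul_comm]
      _ ≤ (n - k) * (n + 1 - k) ^ k :=
          Nat.mul_le_mul_left _ (Nat.pow_le_pow_left (by omega) k)
      _ ≤ (n - k) * n.descFactorial k :=
          Nat.mul_le_mul_left _ (aux_pow_le_descFactorial k n)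

lemma aux_choose_ge (m : ℕ) (hm : 1 ≤ m) :
    6 ^ m ≤ Nat.choose ((2 * m + 1) ^ 2) m := by
  have h1 : (6 * m) ^ m ≤ ((2 * m + 1) ^ 2 + 1 - m) ^ m := by
    apply Nat.pow_le_pow_left
    have he : (2 * m + 1) ^ 2 = 4 * m ^ 2 + 4 * m + 1 := by ring
    have hmm : m ≤ m ^ 2 := Nat.le_self_pow (by norm_num) m
    omega
  have h2 := aux_pow_le_descFactorial m ((2 * m + 1) ^ 2)
  rw [Nat.descFactorial_eq_factorial_mul_choose] at h2
  have h3 : Nat.factorial m * 6 ^ m ≤ Nat.factorial m * Nat.choose ((2 * m + 1) ^ 2) m := by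
    calc Nat.factorial m * 6 ^ m ≤ m ^ m * 6 ^ m :=
          Nat.mul_le_mul_right _ (Nat.factorial_le_pow m)
      _ = (6 * m) ^ m := by rw [mul_pow]; ring
      _ ≤ ((2 * m + 1) ^ 2 + 1 - m) ^ m := h1
      _ ≤ Nat.factorial m * Nat.choose ((2 * m + 1) ^ 2) m := h2
  exact Nat.le_of_mul_le_mul_left h3 (Nat.factorial_pos m)

theorem stmt5 (N : ℕ) : ∃ n : ℕ, 0 < n ∧ N < n ∧
    ¬ (∑ j ∈ Finset.range ((n - 1) / 2 + 1), Nat.choose (n ^ 2) j * 3 ^ j ≤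
        2 ^ (n ^ 2 - 1 - (n - 1) ^ 2)) := by
  set m := N + 1 with hm
  refine ⟨2 * m + 1, by omega, by omega, ?_⟩
  have hdiv : (2 * m + 1 - 1) / 2 = m := by omega
  have hexp : (2 * m + 1) ^ 2 - 1 - (2 * m + 1 - 1) ^ 2 = 4 * m := by
    have h1 : (2 * m + 1) ^ 2 = 4 * m ^ 2 + 4 * m + 1 := by ring
    have h2 : (2 * m + 1 - 1) ^ 2 = 4 * m ^ 2 := by
      have : 2 * m + 1 - 1 = 2 * m := by omega
      rw [this]; ring
    omega
  rw [hdiv, hexp]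
  push_neg
  calc (2 : ℕ) ^ (4 * m) = 16 ^ m := by rw [pow_mul]; norm_num
    _ < 18 ^ m := Nat.pow_lt_pow_left (by norm_num) (by omega)
    _ = 6 ^ m * 3 ^ m := by rw [← mul_pow]; norm_num
    _ ≤ Nat.choose ((2 * m + 1) ^ 2) m * 3 ^ m :=
        Nat.mul_le_mul_right _ (aux_choose_ge m (by omega))
    _ ≤ ∑ j ∈ Finset.range (m + 1), Nat.choose ((2 * m + 1) ^ 2) j * 3 ^ j :=
        Finset.single_le_sum (f := fun j => Nat.choose ((2 * m + 1) ^ 2) j * 3 ^ j)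
          (fun i _ => Nat.zero_le _) (Finset.self_mem_range_succ m)
end

section
/- For every positive integer t and every integers n ≥ 1, k ≥ 0, r ≥ 0 with n - k - r = 4t, n = (2t+1)^2, and d = 2t+1, if 2^(n-k-r) ≥ ∑_{j=0}^{⌊(d-1)/2⌋} C(n,j) 3^j then False; in particular no pure subsystem code with parameters [[(2t+1)^2, 1, 4t^2, 2t+1]] exists. -/
theorem stmt9 (t : ℕ) (ht : 0 < t) (n k r d : ℕ) (hn : 1 ≤ n)
    (hnkr : n - k - r = 4 * t) (hneq : n = (2 * t + 1) ^ 2) (hd : d = 2 * t + 1) :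
    ∑ j ∈ Finset.range ((d - 1) / 2 + 1), Nat.choose n j * 3 ^ j ≤ 2 ^ (n - k - r) →
    False := by
  intro hsum
  have hdt : (d - 1) / 2 = t := by subst hd; omega
  rw [hdt, hnkr] at hsum
  -- single term bound
  have hterm : Nat.choose n t * 3 ^ t ≤ ∑ j ∈ Finset.range (t + 1), Nat.choose n j * 3 ^ j :=
    Finset.single_le_sum (f := fun j => Nat.choose n j * 3 ^ j)
      (fun _ _ => Nat.zero_le _) (Finset.self_mem_range_succ t)
  have hle : Nat.choose n t * 3 ^ t ≤ 2 ^ (4 * t) := le_trans hterm hsum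
  -- lower bound on choose via descFactorial
  have hdesc : (n + 1 - t) ^ t ≤ n.descFactorial t := Nat.pow_sub_le_descFactorial n t
  have hchoose : (n + 1 - t) ^ t ≤ Nat.factorial t * Nat.choose n t := by
    rwa [← Nat.descFactorial_eq_factorial_mul_choose]
  have hfac : Nat.factorial t ≤ t ^ t := Nat.factorial_le_pow t
  -- key inequality: 16 * t < 3 * (n + 1 - t)
  have hkey : 16 * t < 3 * (n + 1 - t) := by
    subst hneq
    have hle2 : t ≤ (2 * t + 1) ^ 2 + 1 := by nlinarith
    zify [hle2]
    nlinarith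
  have h1 : (16 * t) ^ t < (3 * (n + 1 - t)) ^ t :=
    Nat.pow_lt_pow_left hkey (by omega)
  have h2 : 2 ^ (4 * t) * Nat.factorial t ≤ (16 * t) ^ t := by
    calc 2 ^ (4 * t) * Nat.factorial t ≤ 2 ^ (4 * t) * t ^ t := Nat.mul_le_mul_left _ hfac
      _ = (16 * t) ^ t := by rw [mul_pow, pow_mul]; norm_num
  have h3 : (3 * (n + 1 - t)) ^ t ≤ 3 ^ t * (Nat.factorial t * Nat.choose n t) := by
    rw [mul_pow]; exact Nat.mul_le_mul_left _ hchoose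
  have h4 : 2 ^ (4 * t) * Nat.factorial t < 3 ^ t * (Nat.factorial t * Nat.choose n t) :=
    lt_of_le_of_lt h2 (lt_of_lt_of_le h1 h3)
  have h5 : 3 ^ t * (Nat.factorial t * Nat.choose n t) = (Nat.choose n t * 3 ^ t) * Nat.factorial t := by ring
  rw [h5] at h4
  have := Nat.lt_of_mul_lt_mul_right h4
  omega
end
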